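/- Under the stated drift conditions, there exists a constant C > 0, depending only on the laws of B_1 and N_1 and on ε, δ (independent of M and Δ), such that P(Q_{τ̃₂} < M/2 | Q starts at M) ≥ C/M for all sufficiently large M. Moreover, there exist constants C₁, C₂ > 0 independent of M and Δ such that, for all sufficiently large M: for every starting point S ∈ [M/2 − Z_min, M/2), P(Q'_{τ̃₁} ≥ M/2 | Q' starts at S) ≥ 1 − e^{−C₁ΔM}; and for every starting point S ∈ [M/2, M/2 + Z_max], P(Q_{τ̃₂} < M/2 | Q starts at S) ≥ 1 − e^{−C₂ΔM}. -/

import Mathlib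

/-!
The increments `Z_t = B_t - N_t α` of both walks lie in an interval of length
`K = Bmax + |Amax| Nmax`, so after centring they are sub-Gaussian with parameter `c = (K/2)²`
(Hoeffding's lemma), and their mean is `-(α - α*) μ_N`, i.e. `∓ Δ μ_N` for `α = α* ± Δ`. For a
drift `-m < 0`, the Chernoff bound at `λ = m / c` gives `P(∑_{s<t} Z_s ≥ a) ≤ e^{-λa} q^t` with
`q = e^{-m²/2c} < 1`. Summing over `t` bounds the probability that the walk ever climbs by
`a ≈ M/2`, which gives both exponential estimates; letting `t → ∞` shows that the walk cannot stay
forever in a strip.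

For the `C / M` estimate, stop the walk started at `M` when it leaves `[M/2, M)`. Later increments
are independent of the past and have mean `≤ 0`, so on `A = {Z_0 ≤ -ε}` the stopped walk loses
at least `ε P(A)` in expectation; it can only lose when it exits below `M/2`, and then by at most
`M/2 + K`, `K` bounding the overshoot.
-/

open MeasureTheory ProbabilityTheory Filter Set Real

noncomputable section

/-- The random walk started at `S0` with per-step drift `B_s − N_s·α`. -/
def walkC {Ω : Type*} (B N : ℕ → Ω → ℝ) (α S0 : ℝ) (t : ℕ) (ω : Ω) : ℝ :=
  S0 + ∑ s ∈ Finset.range t, (B s ω - N s ω * α)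

/-- First exit time (at a positive time) of the process `Q` from the set `I`;
by convention `sInf ∅ = 0`. -/
def exitTime {Ω : Type*} (Q : ℕ → Ω → ℝ) (I : Set ℝ) (ω : Ω) : ℕ :=
  sInf {t | 0 < t ∧ Q t ω ∉ I}

/-- `B, N` are i.i.d. across time (as a pair process), with the two sequences
independent of each other, and everything measurable. -/
def IsIIDPair {Ω : Type*} [MeasurableSpace Ω] (μ : Measure Ω) (B N : ℕ → Ω → ℝ) : Prop :=
  (∀ t, Measurable (B t)) ∧ (∀ t, Measurable (N t)) ∧
  iIndepFun (fun t ω => (B t ω, N t ω)) μ ∧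
  (∀ t, IdentDistrib (fun ω => (B t ω, N t ω)) (fun ω => (B 0 ω, N 0 ω)) μ μ) ∧
  (∀ t, IndepFun (B t) (N t) μ)

/-- `N` takes values in `{0, 1, …, Nmax}`. -/
def NatValued {Ω : Type*} (N : ℕ → Ω → ℝ) (Nmax : ℕ) : Prop :=
  ∀ t ω, ∃ k : ℕ, k ≤ Nmax ∧ N t ω = k

open scoped ENNReal NNReal Topology

section ExitTime

variable {Ω : Type*} {Q : ℕ → Ω → ℝ} {I : Set ℝ} {ω : Ω} {n : ℕ}

def stayedIn (Q : ℕ → Ω → ℝ) (I : Set ℝ) (n : ℕ) : Set Ω :=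
  {ω | ∀ r, 0 < r → r ≤ n → Q r ω ∈ I}

lemma stayedIn_zero : stayedIn Q I 0 = Set.univ := by
  ext ω; simp only [stayedIn, Set.mem_ofPred_eq, Set.mem_univ, iff_true]; omega

lemma stayedIn_antitone : Antitone (stayedIn Q I) :=
  fun _ _ hnk _ hω r hr hrn => hω r hr (hrn.trans hnk)

lemma iInter_stayedIn : ⋂ n, stayedIn Q I n = {ω | ∀ t, 0 < t → Q t ω ∈ I} := by
  ext ω
  simp only [stayedIn, Set.mem_iInter, Set.mem_ofPred_eq]
  exact ⟨fun h t ht => h t t ht le_rfl, fun h _ r hr _ => h r hr⟩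

lemma exitTime_eq_zero_iff : exitTime Q I ω = 0 ↔ ∀ t, 0 < t → Q t ω ∈ I := by
  simp only [exitTime, Nat.sInf_eq_zero, Set.mem_ofPred_eq, lt_irrefl, false_and,
    false_or, Set.eq_empty_iff_forall_notMem, not_and, not_not]

lemma apply_exitTime_notMem (h : exitTime Q I ω ≠ 0) : Q (exitTime Q I ω) ω ∉ I := by
  rw [Ne, exitTime_eq_zero_iff] at h
  push Not at h
  exact (Nat.sInf_mem h).2

lemma mem_stayedIn_iff_lt_exitTime (h : exitTime Q I ω ≠ 0) :
    ω ∈ stayedIn Q I n ↔ n < exitTime Q I ω := by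
  refine ⟨fun hn => ?_, fun hn r hr hrn => ?_⟩
  · by_contra! hle
    exact apply_exitTime_notMem h (hn _ (Nat.pos_of_ne_zero h) hle)
  · by_contra hr'
    have : exitTime Q I ω ≤ r := Nat.sInf_le ⟨hr, hr'⟩
    omega

lemma exitTime_eq_succ_iff :
    exitTime Q I ω = n + 1 ↔ ω ∈ stayedIn Q I n ∧ Q (n + 1) ω ∉ I := by
  constructor
  · intro h
    have h0 : exitTime Q I ω ≠ 0 := by omega
    refine ⟨(mem_stayedIn_iff_lt_exitTime h0).2 (by omega), h ▸ apply_exitTime_notMem h0⟩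
  · rintro ⟨hn, hexit⟩
    have hle : exitTime Q I ω ≤ n + 1 := Nat.sInf_le ⟨n.succ_pos, hexit⟩
    have h0 : exitTime Q I ω ≠ 0 := fun h0 =>
      hexit (exitTime_eq_zero_iff.1 h0 _ n.succ_pos)
    have := (mem_stayedIn_iff_lt_exitTime h0).1 hn
    omega

variable [MeasurableSpace Ω]

lemma measurableSet_stayedIn (hQ : ∀ t, Measurable (Q t)) (hI : MeasurableSet I) (n : ℕ) :
    MeasurableSet (stayedIn Q I n) := by
  simp only [stayedIn, Set.ofPred_forall]
  exact .iInter fun r => .iInter fun _ => .iInter fun _ => hQ r hI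

lemma measurable_exitTime (hQ : ∀ t, Measurable (Q t)) (hI : MeasurableSet I) :
    Measurable (exitTime Q I) := by
  refine measurable_to_countable' fun n => ?_
  cases n with
  | zero =>
    have : exitTime Q I ⁻¹' {0} = ⋂ n, stayedIn Q I n := by
      ext ω; simp [exitTime_eq_zero_iff, iInter_stayedIn]
    exact this ▸ .iInter (measurableSet_stayedIn hQ hI)
  | succ n =>
    have : exitTime Q I ⁻¹' {n + 1} = stayedIn Q I n ∩ (Q (n + 1) ⁻¹' I)ᶜ := by
      ext ω; simp [exitTime_eq_succ_iff]
    exact this ▸ (measurableSet_stayedIn hQ hI n).inter (hQ (n + 1) hI).compl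

lemma measurable_apply_exitTime (hQ : ∀ t, Measurable (Q t)) (hI : MeasurableSet I) :
    Measurable fun ω => Q (exitTime Q I ω) ω := by
  have hQ' : Measurable fun p : ℕ × Ω => Q p.1 p.2 := measurable_from_prod_countable_right hQ
  exact hQ'.comp ((measurable_exitTime hQ hI).prodMk measurable_id)

end ExitTime

section NegativeDrift

variable {Ω : Type*} [MeasurableSpace Ω] {μ : Measure Ω} [IsProbabilityMeasure μ]
  {Z : ℕ → Ω → ℝ} {c : ℝ≥0} {m : ℝ}

lemma measureReal_sum_range_ge_le (hZ : iIndepFun Z μ)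
    (hsub : ∀ t, HasSubgaussianMGF (fun ω => Z t ω - μ[Z t]) c μ)
    (hdrift : ∀ t, μ[Z t] ≤ -m) (hm : 0 ≤ m) (a : ℝ) (t : ℕ) :
    μ.real {ω | a ≤ ∑ s ∈ Finset.range t, Z s ω}
      ≤ exp (-(m / c * a)) * exp (-(m ^ 2 / (2 * c))) ^ t := by
  have hcentred : iIndepFun (fun s ω => Z s ω - μ[Z s]) μ :=
    hZ.comp (fun (s : ℕ) (x : ℝ) => x - ∫ ω, Z s ω ∂μ) fun _ => measurable_id.sub_const _
  have hY := HasSubgaussianMGF.sum_of_iIndepFun (s := Finset.range t) hcentred fun s _ => hsub s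
  have hshift : {ω | a ≤ ∑ s ∈ Finset.range t, Z s ω}
      ⊆ {ω | a + t * m ≤ ∑ s ∈ Finset.range t, (Z s ω - μ[Z s])} := by
    intro ω hω
    have : ∑ s ∈ Finset.range t, μ[Z s] ≤ ∑ s ∈ Finset.range t, -m :=
      Finset.sum_le_sum fun s _ => hdrift s
    simp only [Set.mem_ofPred_eq, Finset.sum_sub_distrib, Finset.sum_const, Finset.card_range,
      nsmul_eq_mul] at hω this ⊢
    linarith
  calc μ.real {ω | a ≤ ∑ s ∈ Finset.range t, Z s ω}
      ≤ μ.real {ω | a + t * m ≤ ∑ s ∈ Finset.range t, (Z s ω - μ[Z s])} := measureReal_mono hshift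
    _ ≤ exp (-(m / c) * (a + t * m))
          * mgf (fun ω => ∑ s ∈ Finset.range t, (Z s ω - μ[Z s])) μ (m / c) :=
        measure_ge_le_exp_mul_mgf _ (by positivity) (hY.integrable_exp_mul _)
    _ ≤ exp (-(m / c) * (a + t * m)) * exp ((∑ s ∈ Finset.range t, c : ℝ≥0) * (m / c) ^ 2 / 2) := by
        gcongr; exact hY.mgf_le _
    _ = exp (-(m / c * a)) * exp (-(m ^ 2 / (2 * c))) ^ t := by
        rw [← exp_nat_mul, ← exp_add, ← exp_add]
        congr 1
        simp only [Finset.sum_const, Finset.card_range, nsmul_eq_mul, NNReal.coe_mul,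
          NNReal.coe_natCast]
        rcases eq_or_ne (c : ℝ) 0 with hc | hc
        · simp [hc]
        · field_simp
          ring

lemma measureReal_iUnion_sum_range_ge_le (hZ : iIndepFun Z μ)
    (hsub : ∀ t, HasSubgaussianMGF (fun ω => Z t ω - μ[Z t]) c μ)
    (hdrift : ∀ t, μ[Z t] ≤ -m) (hc : 0 < c) (hm : 0 < m) (a : ℝ) :
    μ.real (⋃ t, {ω | a ≤ ∑ s ∈ Finset.range t, Z s ω})
      ≤ exp (-(m / c * a)) / (1 - exp (-(m ^ 2 / (2 * c)))) := by
  set q := exp (-(m ^ 2 / (2 * c)))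
  have hq : q < 1 := exp_lt_one_iff.2 (neg_neg_of_pos (by positivity))
  have hbound : μ (⋃ t, {ω | a ≤ ∑ s ∈ Finset.range t, Z s ω})
      ≤ ENNReal.ofReal (exp (-(m / c * a)) / (1 - q)) :=
    calc μ (⋃ t, {ω | a ≤ ∑ s ∈ Finset.range t, Z s ω})
        ≤ ∑' t, μ {ω | a ≤ ∑ s ∈ Finset.range t, Z s ω} := measure_iUnion_le _
      _ ≤ ∑' t : ℕ, ENNReal.ofReal (exp (-(m / c * a)) * q ^ t) :=
          ENNReal.tsum_le_tsum fun t => by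
            rw [← ofReal_measureReal]
            exact ENNReal.ofReal_le_ofReal
              (measureReal_sum_range_ge_le hZ hsub hdrift hm.le a t)
      _ = ENNReal.ofReal (exp (-(m / c * a)) / (1 - q)) := by
          rw [← ENNReal.ofReal_tsum_of_nonneg (fun t => by positivity)
            ((summable_geometric_of_lt_one (by positivity) hq).mul_left _), tsum_mul_left,
            tsum_geometric_of_lt_one (by positivity) hq, ← div_eq_mul_inv]
  exact ENNReal.toReal_le_of_le_ofReal (div_nonneg (exp_pos _).le (by linarith)) hbound

lemma measure_forall_sum_range_ge_eq_zero (hZ : iIndepFun Z μ)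
    (hsub : ∀ t, HasSubgaussianMGF (fun ω => Z t ω - μ[Z t]) c μ)
    (hdrift : ∀ t, μ[Z t] ≤ -m) (hc : 0 < c) (hm : 0 < m) (b : ℝ) :
    μ {ω | ∀ t, 0 < t → b ≤ ∑ s ∈ Finset.range t, Z s ω} = 0 := by
  set q := exp (-(m ^ 2 / (2 * c)))
  have hq : q < 1 := exp_lt_one_iff.2 (neg_neg_of_pos (by positivity))
  have hlim : Tendsto (fun t : ℕ => exp (-(m / c * b)) * q ^ (t + 1)) atTop (𝓝 0) := by
    simpa using ((tendsto_pow_atTop_nhds_zero_of_lt_one (exp_pos _).le hq).comp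
      (tendsto_add_atTop_nat 1)).const_mul (exp (-(m / c * b)))
  refine (measureReal_eq_zero_iff (measure_ne_top _ _)).1
    (le_antisymm (ge_of_tendsto' hlim fun t => ?_) measureReal_nonneg)
  calc μ.real {ω | ∀ t, 0 < t → b ≤ ∑ s ∈ Finset.range t, Z s ω}
      ≤ μ.real {ω | b ≤ ∑ s ∈ Finset.range (t + 1), Z s ω} :=
        measureReal_mono fun ω hω => hω (t + 1) t.succ_pos
    _ ≤ _ := measureReal_sum_range_ge_le hZ hsub hdrift hm.le b (t + 1)

lemma measureReal_le_of_subset_iUnion_union (hZ : iIndepFun Z μ)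
    (hsub : ∀ t, HasSubgaussianMGF (fun ω => Z t ω - μ[Z t]) c μ)
    (hdrift : ∀ t, μ[Z t] ≤ -m) (hc : 0 < c) (hm : 0 < m) {a b : ℝ} {F : Set Ω}
    (hF : F ⊆ (⋃ t, {ω | a ≤ ∑ s ∈ Finset.range t, Z s ω})
      ∪ {ω | ∀ t, 0 < t → b ≤ ∑ s ∈ Finset.range t, Z s ω}) :
    μ.real F ≤ exp (-(m / c * a)) / (1 - exp (-(m ^ 2 / (2 * c)))) :=
  calc μ.real F ≤ μ.real (⋃ t, {ω | a ≤ ∑ s ∈ Finset.range t, Z s ω})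
        + μ.real {ω | ∀ t, 0 < t → b ≤ ∑ s ∈ Finset.range t, Z s ω} :=
        (measureReal_mono hF).trans (measureReal_union_le _ _)
    _ ≤ _ := by
        rw [(measureReal_eq_zero_iff (measure_ne_top _ _)).2
          (measure_forall_sum_range_ge_eq_zero hZ hsub hdrift hc hm b), add_zero]
        exact measureReal_iUnion_sum_range_ge_le hZ hsub hdrift hc hm a

end NegativeDrift

lemma exp_neg_mul_div_le {κ r K M a : ℝ} (hκ : 0 < κ) (hr : 0 < r)
    (hM : K + (κ * r)⁻¹ ≤ M / 4) (ha : M / 2 - K ≤ a) :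
    exp (-(κ * a)) / r ≤ exp (-(κ / 4 * M)) := by
  have hy : r⁻¹ ≤ κ * (M / 4 - K) :=
    calc r⁻¹ = κ * (κ * r)⁻¹ := by field_simp
      _ ≤ κ * (M / 4 - K) := by gcongr; linarith
  have hexp : exp (-(κ * (M / 4 - K))) ≤ r := by
    rw [exp_neg]
    exact inv_le_of_inv_le₀ hr (hy.trans ((le_add_of_nonneg_right zero_le_one).trans
      (add_one_le_exp _)))
  rw [div_le_iff₀ hr]
  calc exp (-(κ * a)) ≤ exp (-(κ * (M / 2 - K))) := exp_le_exp.2 (by nlinarith)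
    _ = exp (-(κ / 4 * M)) * exp (-(κ * (M / 4 - K))) := by rw [← exp_add]; ring_nf
    _ ≤ exp (-(κ / 4 * M)) * r := by gcongr

section ExitProbabilities

variable {Ω : Type*} [MeasurableSpace Ω] {μ : Measure Ω} [IsProbabilityMeasure μ]
  {Z : ℕ → Ω → ℝ} {c : ℝ≥0} {m : ℝ} {Q : ℕ → Ω → ℝ} {S K M : ℝ}

lemma one_sub_measureReal_compl_le (s : Set Ω) : 1 - μ.real sᶜ ≤ μ.real s := by
  have := measureReal_union_le (μ := μ) s sᶜ
  rw [Set.union_compl_self, probReal_univ] at this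
  linarith

lemma one_sub_le_measureReal_exit_below (hZ : iIndepFun Z μ)
    (hsub : ∀ t, HasSubgaussianMGF (fun ω => Z t ω - μ[Z t]) c μ)
    (hdrift : ∀ t, μ[Z t] ≤ -m) (hc : 0 < c) (hm : 0 < m)
    (hQ : ∀ t ω, Q t ω = S + ∑ s ∈ Finset.range t, Z s ω) (lo hi : ℝ) :
    1 - exp (-(m / c * (hi - S))) / (1 - exp (-(m ^ 2 / (2 * c))))
      ≤ μ.real {ω | Q (exitTime Q (Set.Ico lo hi) ω) ω < lo} := by
  refine le_trans ?_ (one_sub_measureReal_compl_le _)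
  gcongr
  refine measureReal_le_of_subset_iUnion_union hZ hsub hdrift hc hm (b := lo - S) fun ω hω => ?_
  simp only [Set.mem_compl_iff, Set.mem_ofPred_eq, not_lt] at hω
  by_cases hT : exitTime Q (Set.Ico lo hi) ω = 0
  · refine Or.inr fun t ht => ?_
    have := (exitTime_eq_zero_iff.1 hT t ht).1
    rw [hQ] at this
    linarith
  · have hout := apply_exitTime_notMem hT
    rw [Set.mem_Ico, not_and, not_lt, hQ] at hout
    have := hout (hQ _ ω ▸ hω)
    exact Or.inl (Set.mem_iUnion.2 ⟨_, by simp only [Set.mem_ofPred_eq]; linarith⟩)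

lemma one_sub_le_measureReal_exit_above (hZ : iIndepFun Z μ)
    (hsub : ∀ t, HasSubgaussianMGF (fun ω => Z t ω - μ[Z t]) c μ)
    (hdrift : ∀ t, m ≤ μ[Z t]) (hc : 0 < c) (hm : 0 < m)
    (hQ : ∀ t ω, Q t ω = S + ∑ s ∈ Finset.range t, Z s ω) (lo hi : ℝ) :
    1 - exp (-(m / c * (S - lo))) / (1 - exp (-(m ^ 2 / (2 * c))))
      ≤ μ.real {ω | hi ≤ Q (exitTime Q (Set.Ioo lo hi) ω) ω} := by
  have hW : iIndepFun (fun t ω => -Z t ω) μ := hZ.comp (fun _ x => -x) fun _ => measurable_neg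
  have hsubW : ∀ t, HasSubgaussianMGF (fun ω => -Z t ω - μ[fun ω => -Z t ω]) c μ := fun t =>
    (hsub t).neg.congr (ae_of_all _ fun ω => by simp only [Pi.neg_apply, integral_neg]; ring)
  have hdriftW : ∀ t, μ[fun ω => -Z t ω] ≤ -m := fun t => by
    rw [integral_neg]; linarith [hdrift t]
  refine le_trans ?_ (one_sub_measureReal_compl_le _)
  gcongr
  refine measureReal_le_of_subset_iUnion_union hW hsubW hdriftW hc hm (b := S - hi) fun ω hω => ?_
  simp only [Set.mem_compl_iff, Set.mem_ofPred_eq, not_le] at hω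
  simp only [Finset.sum_neg_distrib, Set.mem_union, Set.mem_iUnion, Set.mem_ofPred_eq]
  by_cases hT : exitTime Q (Set.Ioo lo hi) ω = 0
  · refine Or.inr fun t ht => ?_
    have := (exitTime_eq_zero_iff.1 hT t ht).2
    rw [hQ] at this
    linarith
  · have hout := apply_exitTime_notMem hT
    rw [Set.mem_Ioo, not_and, not_lt, hQ] at hout
    have := hout.mt (not_le.2 (hQ _ ω ▸ hω))
    exact Or.inl ⟨_, by linarith⟩

lemma one_sub_exp_le_measureReal_exit_below (hZ : iIndepFun Z μ)
    (hsub : ∀ t, HasSubgaussianMGF (fun ω => Z t ω - μ[Z t]) c μ)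
    (hdrift : ∀ t, μ[Z t] ≤ -m) (hc : 0 < c) (hm : 0 < m)
    (hQ : ∀ t ω, Q t ω = S + ∑ s ∈ Finset.range t, Z s ω) {lo hi : ℝ}
    (hM : K + (m / c * (1 - exp (-(m ^ 2 / (2 * c)))))⁻¹ ≤ M / 4) (hS : M / 2 - K ≤ hi - S) :
    1 - exp (-(m / c / 4 * M)) ≤ μ.real {ω | Q (exitTime Q (Set.Ico lo hi) ω) ω < lo} :=
  (sub_le_sub_left (exp_neg_mul_div_le (by positivity)
    (sub_pos.2 (exp_lt_one_iff.2 (neg_neg_of_pos (by positivity)))) hM hS) 1).trans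
    (one_sub_le_measureReal_exit_below hZ hsub hdrift hc hm hQ lo hi)

lemma one_sub_exp_le_measureReal_exit_above (hZ : iIndepFun Z μ)
    (hsub : ∀ t, HasSubgaussianMGF (fun ω => Z t ω - μ[Z t]) c μ)
    (hdrift : ∀ t, m ≤ μ[Z t]) (hc : 0 < c) (hm : 0 < m)
    (hQ : ∀ t ω, Q t ω = S + ∑ s ∈ Finset.range t, Z s ω) {lo hi : ℝ}
    (hM : K + (m / c * (1 - exp (-(m ^ 2 / (2 * c)))))⁻¹ ≤ M / 4) (hS : M / 2 - K ≤ S - lo) :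
    1 - exp (-(m / c / 4 * M)) ≤ μ.real {ω | hi ≤ Q (exitTime Q (Set.Ioo lo hi) ω) ω} :=
  (sub_le_sub_left (exp_neg_mul_div_le (by positivity)
    (sub_pos.2 (exp_lt_one_iff.2 (neg_neg_of_pos (by positivity)))) hM hS) 1).trans
    (one_sub_le_measureReal_exit_above hZ hsub hdrift hc hm hQ lo hi)

end ExitProbabilities

section OptionalStopping

variable {Ω : Type*} {Z : ℕ → Ω → ℝ} {Q : ℕ → Ω → ℝ} {I : Set ℝ} {S K lo hi : ℝ}

/-- For the walk `Q = S + ∑ Z`, this is `Q (min n τ) - S` with `τ` the exit time from `I`. -/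
def stoppedSum (Z Q : ℕ → Ω → ℝ) (I : Set ℝ) (n : ℕ) (ω : Ω) : ℝ :=
  ∑ s ∈ Finset.range n, (stayedIn Q I s).indicator (Z s) ω

lemma stoppedSum_of_mem_stayedIn (hQ : ∀ t ω, Q t ω = S + ∑ s ∈ Finset.range t, Z s ω)
    {n : ℕ} {ω : Ω} (hω : ω ∈ stayedIn Q I n) : stoppedSum Z Q I n ω = Q n ω - S := by
  rw [hQ, add_sub_cancel_left, stoppedSum]
  exact Finset.sum_congr rfl fun s hs =>
    Set.indicator_of_mem (stayedIn_antitone (Finset.mem_range.1 hs).le hω) _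

lemma stoppedSum_of_notMem_stayedIn (hQ : ∀ t ω, Q t ω = S + ∑ s ∈ Finset.range t, Z s ω)
    {n : ℕ} {ω : Ω} (hω : ω ∉ stayedIn Q I n) :
    stoppedSum Z Q I n ω = Q (exitTime Q I ω) ω - S := by
  have hT : exitTime Q I ω ≠ 0 := fun hT =>
    hω fun r hr _ => exitTime_eq_zero_iff.1 hT r hr
  have hTn : exitTime Q I ω ≤ n := not_lt.1 ((mem_stayedIn_iff_lt_exitTime hT).not.1 hω)
  rw [hQ, add_sub_cancel_left, stoppedSum, ← Finset.sum_range_add_sum_Ico _ hTn,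
    Finset.sum_eq_zero fun s hs => Set.indicator_of_notMem
      (fun h => absurd ((mem_stayedIn_iff_lt_exitTime hT).1 h) (Finset.mem_Ico.1 hs).1.not_gt) _,
    add_zero]
  exact Finset.sum_congr rfl fun s hs =>
    Set.indicator_of_mem ((mem_stayedIn_iff_lt_exitTime hT).2 (Finset.mem_range.1 hs)) _

lemma sub_le_apply_exitTime (hQ : ∀ t ω, Q t ω = S + ∑ s ∈ Finset.range t, Z s ω)
    (hlow : ∀ t ω, -K ≤ Z t ω) (hS : lo ≤ S) {ω : Ω}
    (hT : exitTime Q (Set.Ico lo hi) ω ≠ 0) : lo - K ≤ Q (exitTime Q (Set.Ico lo hi) ω) ω := by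
  obtain ⟨n, hn⟩ := Nat.exists_eq_succ_of_ne_zero hT
  have hstay := (mem_stayedIn_iff_lt_exitTime (n := n) hT).2 (by omega)
  have hQn : lo ≤ Q n ω := by
    rcases n.eq_zero_or_pos with rfl | hn0
    · simpa [hQ] using hS
    · exact (hstay n hn0 le_rfl).1
  have hstep : Q (n + 1) ω = Q n ω + Z n ω := by
    rw [hQ, hQ, Finset.sum_range_succ, add_assoc]
  rw [hn, hstep]
  linarith [hlow n ω]

lemma indicator_le_stoppedSum (hQ : ∀ t ω, Q t ω = hi + ∑ s ∈ Finset.range t, Z s ω)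
    (hlow : ∀ t ω, -K ≤ Z t ω) (hK : 0 ≤ K) (hlohi : lo ≤ hi) (n : ℕ) (ω : Ω) :
    ({ω | Q (exitTime Q (Set.Ico lo hi) ω) ω < lo} ∪ stayedIn Q (Set.Ico lo hi) n).indicator
      (fun _ => -(hi - lo + K)) ω ≤ stoppedSum Z Q (Set.Ico lo hi) n ω := by
  by_cases hstay : ω ∈ stayedIn Q (Set.Ico lo hi) n
  · rw [Set.indicator_of_mem (Set.mem_union_right _ hstay), stoppedSum_of_mem_stayedIn hQ hstay]
    rcases n.eq_zero_or_pos with rfl | hn0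
    · simp only [hQ, Finset.range_zero, Finset.sum_empty, add_zero]
      linarith
    · linarith [(hstay n hn0 le_rfl).1]
  · have hT : exitTime Q (Set.Ico lo hi) ω ≠ 0 := fun hT =>
      hstay fun r hr _ => exitTime_eq_zero_iff.1 hT r hr
    rw [stoppedSum_of_notMem_stayedIn hQ hstay]
    by_cases hbelow : ω ∈ {ω | Q (exitTime Q (Set.Ico lo hi) ω) ω < lo}
    · rw [Set.indicator_of_mem (Set.mem_union_left _ hbelow)]
      linarith [sub_le_apply_exitTime hQ hlow hlohi hT]
    · have hout := apply_exitTime_notMem hT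
      rw [Set.mem_Ico, not_and, not_lt] at hout
      rw [Set.indicator_of_notMem (by rintro (h | h) <;> contradiction)]
      linarith [hout (not_lt.1 hbelow)]

abbrev sigmaBefore (Z : ℕ → Ω → ℝ) (t : ℕ) : MeasurableSpace Ω :=
  ⨆ s ∈ Set.Iio t, MeasurableSpace.comap (Z s) inferInstance

lemma measurable_sigmaBefore {s t : ℕ} (h : s < t) : Measurable[sigmaBefore Z t] (Z s) :=
  Measurable.of_comap_le (le_biSup (f := fun n => MeasurableSpace.comap (Z n) inferInstance) h)

lemma measurableSet_sigmaBefore_stayedIn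
    (hQ : ∀ t ω, Q t ω = S + ∑ s ∈ Finset.range t, Z s ω) (hI : MeasurableSet I) (n : ℕ) :
    MeasurableSet[sigmaBefore Z n] (stayedIn Q I n) := by
  have hQm : ∀ r ≤ n, Measurable[sigmaBefore Z n] (Q r) := fun r hr => by
    simp_rw [funext (hQ r)]
    exact measurable_const.add (Finset.measurable_sum _ fun s hs =>
      measurable_sigmaBefore ((Finset.mem_range.1 hs).trans_le hr))
  simp only [stayedIn, Set.ofPred_forall]
  exact .iInter fun r => .iInter fun _ => .iInter fun hr => hQm r hr hI

variable [MeasurableSpace Ω] {μ : Measure Ω}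

lemma sigmaBefore_le (hZm : ∀ t, Measurable (Z t)) (t : ℕ) :
    sigmaBefore Z t ≤ ‹MeasurableSpace Ω› :=
  iSup₂_le fun s _ => (hZm s).comap_le

lemma indep_sigmaBefore (hZm : ∀ t, Measurable (Z t)) (hZ : iIndepFun Z μ)
    (t : ℕ) : Indep (sigmaBefore Z t) (MeasurableSpace.comap (Z t) inferInstance) μ :=
  indep_of_indep_of_le_right (indep_biSup_compl (fun n => (hZm n).comap_le) hZ.iIndep _)
    (le_biSup (f := fun n => MeasurableSpace.comap (Z n) inferInstance)
      Set.self_notMem_Iio)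

variable [IsProbabilityMeasure μ]

lemma setIntegral_stoppedSum_le (hZm : ∀ t, Measurable (Z t)) (hZ : iIndepFun Z μ)
    (hdrift : ∀ t, μ[Z t] ≤ 0) (hK : ∀ t ω, |Z t ω| ≤ K)
    (hQ : ∀ t ω, Q t ω = S + ∑ s ∈ Finset.range t, Z s ω) (hI : MeasurableSet I) (ε : ℝ)
    {n : ℕ} (hn : 0 < n) :
    ∫ ω in {ω | Z 0 ω ≤ -ε}, stoppedSum Z Q I n ω ∂μ ≤ -ε * μ.real {ω | Z 0 ω ≤ -ε} := by
  set A := {ω | Z 0 ω ≤ -ε}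
  have hG : ∀ s, MeasurableSet (stayedIn Q I s) := fun s =>
    sigmaBefore_le hZm s _ (measurableSet_sigmaBefore_stayedIn hQ hI s)
  have hint : ∀ s, Integrable ((stayedIn Q I s).indicator (Z s)) (μ.restrict A) := fun s =>
    (Integrable.of_bound (hZm s).aestronglyMeasurable K (ae_of_all _ (hK s))).indicator (hG s)
  have hfirst : ∫ ω in A, (stayedIn Q I 0).indicator (Z 0) ω ∂μ ≤ -ε * μ.real A := by
    rw [stayedIn_zero, Set.indicator_univ, mul_comm, ← smul_eq_mul, ← setIntegral_const]
    exact setIntegral_mono_on (hint 0 |>.congr (by simp [stayedIn_zero]))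
      (integrable_const _) ((hZm 0) measurableSet_Iic) fun ω hω => hω
  have hlater : ∀ s, ∫ ω in A, (stayedIn Q I (s + 1)).indicator (Z (s + 1)) ω ∂μ ≤ 0 := by
    intro s
    have hA : MeasurableSet[sigmaBefore Z (s + 1)] A :=
      measurable_sigmaBefore s.succ_pos measurableSet_Iic
    calc ∫ ω in A, (stayedIn Q I (s + 1)).indicator (Z (s + 1)) ω ∂μ
        = ∫ ω in A ∩ stayedIn Q I (s + 1), Z (s + 1) ω ∂μ := setIntegral_indicator (hG _)
      _ = μ.real (A ∩ stayedIn Q I (s + 1)) * μ[Z (s + 1)] :=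
          Indep.setIntegral_eq_mul (f := fun x => x) (sigmaBefore_le hZm _)
            (indep_sigmaBefore hZm hZ _) (hZm _).aemeasurable
            (hA.inter (measurableSet_sigmaBefore_stayedIn hQ hI _)) aestronglyMeasurable_id
      _ ≤ 0 := mul_nonpos_of_nonneg_of_nonpos measureReal_nonneg (hdrift _)
  obtain ⟨k, rfl⟩ := Nat.exists_eq_add_one_of_ne_zero hn.ne'
  unfold stoppedSum
  rw [integral_finsetSum _ fun s _ => hint s, Finset.sum_range_succ']
  linarith [Finset.sum_nonpos fun s (_ : s ∈ Finset.range k) => hlater s]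

lemma mul_measureReal_le_exit_below (hZm : ∀ t, Measurable (Z t)) (hZ : iIndepFun Z μ)
    (hdrift : ∀ t, μ[Z t] ≤ 0) (hK : ∀ t ω, |Z t ω| ≤ K)
    (hQ : ∀ t ω, Q t ω = hi + ∑ s ∈ Finset.range t, Z s ω) (hlohi : lo ≤ hi)
    (hnever : μ {ω | ∀ t, 0 < t → Q t ω ∈ Set.Ico lo hi} = 0) (ε : ℝ) :
    ε * μ.real {ω | Z 0 ω ≤ -ε}
      ≤ (hi - lo + K) * μ.real {ω | Q (exitTime Q (Set.Ico lo hi) ω) ω < lo} := by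
  set A := {ω | Z 0 ω ≤ -ε}
  set D := {ω | Q (exitTime Q (Set.Ico lo hi) ω) ω < lo}
  set G := stayedIn Q (Set.Ico lo hi)
  obtain ⟨ω₀⟩ := nonempty_of_isProbabilityMeasure μ
  have hK0 : 0 ≤ K := (abs_nonneg _).trans (hK 0 ω₀)
  have hQm : ∀ t, Measurable (Q t) := fun t => by
    simp_rw [funext (hQ t)]
    exact measurable_const.add (Finset.measurable_sum _ fun s _ => hZm s)
  have hD : MeasurableSet D := measurable_apply_exitTime hQm measurableSet_Ico measurableSet_Iio
  have hG : ∀ n, MeasurableSet (G n) := measurableSet_stayedIn hQm measurableSet_Ico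
  have hbound : ∀ n, 0 < n → ε * μ.real A ≤ (hi - lo + K) * (μ.real D + μ.real (G n)) := by
    intro n hn
    have hlower : μ.real (A ∩ (D ∪ G n)) * -(hi - lo + K)
        ≤ ∫ ω in A, stoppedSum Z Q (Set.Ico lo hi) n ω ∂μ := by
      rw [← smul_eq_mul, ← setIntegral_const, ← setIntegral_indicator (hD.union (hG n))]
      refine setIntegral_mono ((integrable_const _).indicator (hD.union (hG n))) ?_
        (indicator_le_stoppedSum hQ (fun t ω => neg_le_of_abs_le (hK t ω)) hK0 hlohi n)
      exact integrable_finsetSum _ fun s _ =>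
        (Integrable.of_bound (hZm s).aestronglyMeasurable K (ae_of_all _ (hK s))).indicator (hG s)
    have hAE : μ.real (A ∩ (D ∪ G n)) ≤ μ.real D + μ.real (G n) :=
      (measureReal_mono Set.inter_subset_right).trans (measureReal_union_le _ _)
    have := setIntegral_stoppedSum_le hZm hZ hdrift hK hQ (measurableSet_Ico (a := lo) (b := hi)) ε hn
    nlinarith
  have hGlim : Tendsto (fun n => μ.real (G n)) atTop (𝓝 0) := by
    have := tendsto_measure_iInter_atTop (fun n => (hG n).nullMeasurableSet) stayedIn_antitone
      ⟨0, measure_ne_top μ _⟩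
    rw [iInter_stayedIn, hnever] at this
    exact (ENNReal.tendsto_toReal ENNReal.zero_ne_top).comp this
  have hlim := (hGlim.const_add (μ.real D)).const_mul (hi - lo + K)
  rw [add_zero] at hlim
  exact ge_of_tendsto hlim (eventually_atTop.2 ⟨1, fun n hn => hbound n hn⟩)

lemma div_le_measureReal_exit_below_half {c : ℝ≥0} {m M ε δ : ℝ}
    (hZm : ∀ t, Measurable (Z t)) (hZ : iIndepFun Z μ)
    (hsub : ∀ t, HasSubgaussianMGF (fun ω => Z t ω - μ[Z t]) c μ)
    (hdrift : ∀ t, μ[Z t] ≤ -m) (hc : 0 < c) (hm : 0 < m) (hK : ∀ t ω, |Z t ω| ≤ K)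
    (hQ : ∀ t ω, Q t ω = M + ∑ s ∈ Finset.range t, Z s ω) (hKM : K ≤ M / 4) (hM : 0 < M)
    (hε : 0 ≤ ε) (hδ : δ ≤ μ.real {ω | Z 0 ω ≤ -ε}) :
    ε * δ / 2 / M ≤ μ.real {ω | Q (exitTime Q (Set.Ico (M / 2) M) ω) ω < M / 2} := by
  have hnever : μ {ω | ∀ t, 0 < t → Q t ω ∈ Set.Ico (M / 2) M} = 0 := by
    refine measure_mono_null (fun ω hω => ?_)
      (measure_forall_sum_range_ge_eq_zero hZ hsub hdrift hc hm (M / 2 - M))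
    intro t ht
    have := (hω t ht).1
    rw [hQ] at this
    linarith
  have h := mul_measureReal_le_exit_below hZm hZ (fun t => (hdrift t).trans (by linarith)) hK hQ
    (by linarith) hnever ε
  have hD := measureReal_nonneg (μ := μ)
    (s := {ω | Q (exitTime Q (Set.Ico (M / 2) M) ω) ω < M / 2})
  rw [div_le_iff₀ hM]
  nlinarith [mul_le_mul_of_nonneg_left hδ hε, mul_le_mul_of_nonneg_right hKM hD]

end OptionalStopping

section Steps

variable {Ω : Type*} {B N : ℕ → Ω → ℝ} {Bmax A α : ℝ} {Nmax : ℕ}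

lemma NatValued.mem_Icc (h : NatValued N Nmax) (t : ℕ) (ω : Ω) : N t ω ∈ Set.Icc 0 (Nmax : ℝ) := by
  obtain ⟨k, hk, hN⟩ := h t ω
  exact hN ▸ ⟨k.cast_nonneg, Nat.cast_le.2 hk⟩

lemma sub_mul_mem_Icc (hB : ∀ t ω, B t ω ∈ Set.Icc 0 Bmax) (hN : NatValued N Nmax)
    (hα : 0 ≤ α) (hαA : α ≤ A) (t : ℕ) (ω : Ω) :
    B t ω - N t ω * α ∈ Set.Icc (-(A * Nmax)) Bmax := by
  obtain ⟨hB0, hB1⟩ := hB t ω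
  obtain ⟨hN0, hN1⟩ := hN.mem_Icc t ω
  constructor <;> nlinarith

lemma abs_sub_mul_le (hB : ∀ t ω, B t ω ∈ Set.Icc 0 Bmax) (hN : NatValued N Nmax)
    (hα : 0 ≤ α) (hαA : α ≤ A) (t : ℕ) (ω : Ω) :
    |B t ω - N t ω * α| ≤ Bmax + A * Nmax := by
  obtain ⟨h0, h1⟩ := sub_mul_mem_Icc hB hN hα hαA t ω
  have : 0 ≤ Bmax := (hB t ω).1.trans (hB t ω).2
  have : 0 ≤ A * Nmax := mul_nonneg (hα.trans hαA) (Nat.cast_nonneg _)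
  exact abs_le.2 ⟨by linarith, by linarith⟩

lemma setOf_sub_mul_le_subset (hN : NatValued N Nmax) {β : ℝ} (hαβ : α ≤ β) (t : ℕ) (x : ℝ) :
    {ω | B t ω - N t ω * α ≤ x} ⊆ {ω | B t ω - N t ω * β ≤ x} := fun ω hω => by
  have := (hN.mem_Icc t ω).1
  simp only [Set.mem_ofPred_eq] at hω ⊢
  nlinarith

variable [MeasurableSpace Ω] {μ : Measure Ω}

lemma IsIIDPair.measurable_sub_mul (h : IsIIDPair μ B N) (α : ℝ) (t : ℕ) :
    Measurable fun ω => B t ω - N t ω * α :=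
  (h.1 t).sub ((h.2.1 t).mul_const α)

lemma IsIIDPair.iIndepFun_sub_mul (h : IsIIDPair μ B N) (α : ℝ) :
    iIndepFun (fun t ω => B t ω - N t ω * α) μ :=
  h.2.2.1.comp (fun _ p => p.1 - p.2 * α) fun _ => by fun_prop

variable [IsProbabilityMeasure μ]

lemma IsIIDPair.integral_sub_mul (h : IsIIDPair μ B N) (hB : ∀ t ω, B t ω ∈ Set.Icc 0 Bmax)
    (hN : NatValued N Nmax) (α : ℝ) (t : ℕ) :
    μ[fun ω => B t ω - N t ω * α] = μ[B 0] - α * μ[N 0] := by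
  have hBi : Integrable (B 0) μ := .of_mem_Icc 0 Bmax (h.1 0).aemeasurable (ae_of_all _ (hB 0))
  have hNi : Integrable (N 0) μ :=
    .of_mem_Icc 0 Nmax (h.2.1 0).aemeasurable (ae_of_all _ (hN.mem_Icc 0))
  have := ((h.2.2.2.1 t).comp (u := fun p : ℝ × ℝ => p.1 - p.2 * α) (by fun_prop)).integral_eq
  simp only [Function.comp_def] at this
  rw [this, integral_sub hBi (hNi.mul_const α), integral_mul_const, mul_comm]

lemma IsIIDPair.hasSubgaussianMGF_sub_mul (h : IsIIDPair μ B N)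
    (hB : ∀ t ω, B t ω ∈ Set.Icc 0 Bmax) (hN : NatValued N Nmax) (hα : 0 ≤ α) (hαA : α ≤ A)
    (t : ℕ) :
    HasSubgaussianMGF (fun ω => B t ω - N t ω * α - μ[fun ω => B t ω - N t ω * α])
      ((‖Bmax + A * Nmax‖₊ / 2) ^ 2) μ := by
  have := hasSubgaussianMGF_of_mem_Icc (μ := μ) (h.measurable_sub_mul α t).aemeasurable
    (ae_of_all _ (sub_mul_mem_Icc hB hN hα hαA t))
  rwa [sub_neg_eq_add] at this

end Steps

/-- Lemma 3 of the paper. For the upper-regime walk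
`Q_t = S₀ + Σ_{s≤t}(B_s − N_s(α*+Δ))` with exit time `τ̃₂` from `[M/2, M)` and the
lower-regime walk `Q'_t = S₀ + Σ_{s≤t}(B_s − N_s(α*−Δ))` with exit time `τ̃₁` from
`(0, M/2)`: the walk started at `M` crosses below `M/2` before hitting `M` with probability
at least `C/M`; started in `[M/2 − Z_min, M/2)`, `Q'` exits above `M/2` with probability at
least `1 − e^{−C₁ΔM}`; and started in `[M/2, M/2 + Z_max]`, `Q` exits below `M/2` with
probability at least `1 − e^{−C₂ΔM}`, where `C, C₁, C₂ > 0` do not depend on `M` or `Δ`. -/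
theorem stmt_7
    {Ω : Type*} [MeasurableSpace Ω] (μ : Measure Ω) [IsProbabilityMeasure μ]
    (Bmax Amax : ℝ) (Nmax : ℕ) (B N : ℕ → Ω → ℝ)
    (hBN : IsIIDPair μ B N)
    (hBrange : ∀ t ω, B t ω ∈ Set.Icc 0 Bmax)
    (hNrange : NatValued N Nmax)
    (hμB : 0 < ∫ ω, B 0 ω ∂μ) (hμN : 0 < ∫ ω, N 0 ω ∂μ)
    (αstar : ℝ) (hαdef : αstar = (∫ ω, B 0 ω ∂μ) / ∫ ω, N 0 ω ∂μ) :
    ∀ ε δ : ℝ, 0 < ε → 0 < δ →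
      ∃ C C₁ C₂ : ℝ, 0 < C ∧ 0 < C₁ ∧ 0 < C₂ ∧
        ∀ Δ : ℝ, 0 < Δ → Δ < αstar → αstar + Δ ≤ Amax →
          ENNReal.ofReal δ ≤ μ {ω | ε ≤ B 0 ω - N 0 ω * (αstar + Δ)} →
          ENNReal.ofReal δ ≤ μ {ω | B 0 ω - N 0 ω * (αstar - Δ) ≤ -ε} →
          ∃ M₁ : ℝ, 0 < M₁ ∧ ∀ M, M₁ ≤ M →
            (C / M ≤ (μ {ω |
                walkC B N (αstar + Δ) M
                  (exitTime (walkC B N (αstar + Δ) M) (Set.Ico (M / 2) M) ω) ω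
                  < M / 2}).toReal) ∧
            (∀ S, M / 2 - Amax * Nmax ≤ S → S < M / 2 →
              1 - Real.exp (-(C₁ * Δ * M)) ≤ (μ {ω |
                M / 2 ≤ walkC B N (αstar - Δ) S
                  (exitTime (walkC B N (αstar - Δ) S) (Set.Ioo 0 (M / 2)) ω) ω}).toReal) ∧
            (∀ S, M / 2 ≤ S → S ≤ M / 2 + Bmax →
              1 - Real.exp (-(C₂ * Δ * M)) ≤ (μ {ω |
                walkC B N (αstar + Δ) S
                  (exitTime (walkC B N (αstar + Δ) S) (Set.Ico (M / 2) M) ω) ω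
                  < M / 2}).toReal) := by
  intro ε δ hε hδ
  set K := Bmax + |Amax| * Nmax
  set c : ℝ≥0 := (‖K‖₊ / 2) ^ 2
  have hBmax : 0 < Bmax := hμB.trans_le <| by
    simpa using integral_mono (.of_mem_Icc 0 Bmax (hBN.1 0).aemeasurable
      (ae_of_all _ (hBrange 0))) (integrable_const (μ := μ) Bmax) fun ω => (hBrange 0 ω).2
  have hK : 0 < K := by positivity
  have hc : 0 < c := pow_pos (div_pos (nnnorm_pos.2 hK.ne') two_pos) 2
  refine ⟨ε * δ / 2, (∫ ω, N 0 ω ∂μ) / (4 * c), (∫ ω, N 0 ω ∂μ) / (4 * c),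
    by positivity, by positivity, by positivity, ?_⟩
  rintro Δ hΔ hΔα hαA - hlow
  have hαμ : αstar * ∫ ω, N 0 ω ∂μ = ∫ ω, B 0 ω ∂μ := by rw [hαdef]; field_simp
  set m := Δ * ∫ ω, N 0 ω ∂μ
  have hm : 0 < m := by positivity
  have hq : 0 < 1 - exp (-(m ^ 2 / (2 * c))) :=
    sub_pos.2 (exp_lt_one_iff.2 (neg_neg_of_pos (by positivity)))
  have hsub : ∀ α, 0 ≤ α → α ≤ Amax → ∀ t,
      HasSubgaussianMGF (fun ω => B t ω - N t ω * α - μ[fun ω => B t ω - N t ω * α]) c μ :=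
    fun α h0 h1 => hBN.hasSubgaussianMGF_sub_mul hBrange hNrange h0 (h1.trans (le_abs_self Amax))
  have hdrift : ∀ α t, μ[fun ω => B t ω - N t ω * α] = -((α - αstar) * ∫ ω, N 0 ω ∂μ) := by
    intro α t; rw [hBN.integral_sub_mul hBrange hNrange]; linarith
  have hexponent : (∫ ω, N 0 ω ∂μ) / (4 * c) * Δ = m / c / 4 := by ring
  have hinv : 0 < (m / c * (1 - exp (-(m ^ 2 / (2 * c)))))⁻¹ := by positivity
  refine ⟨4 * (K + (m / c * (1 - exp (-(m ^ 2 / (2 * c)))))⁻¹), by positivity, fun M hM => ?_⟩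
  have hM4 : K + (m / c * (1 - exp (-(m ^ 2 / (2 * c)))))⁻¹ ≤ M / 4 := by linarith
  have hKM : K ≤ M / 4 := by linarith
  refine ⟨?_, fun S hS₁ hS₂ => ?_, fun S hS₁ hS₂ => ?_⟩
  · refine div_le_measureReal_exit_below_half (hBN.measurable_sub_mul _) (hBN.iIndepFun_sub_mul _)
      (hsub _ (by linarith) hαA) (fun t => (hdrift _ t).trans_le (by simp [m])) hc hm
      (abs_sub_mul_le hBrange hNrange (by linarith) (hαA.trans (le_abs_self _))) (fun _ _ => rfl)
      hKM (by linarith) hε.le ?_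
    exact (ENNReal.ofReal_le_iff_le_toReal (measure_ne_top _ _)).1
      (hlow.trans (measure_mono (setOf_sub_mul_le_subset hNrange (by linarith) 0 _)))
  · rw [hexponent]
    refine one_sub_exp_le_measureReal_exit_above (hBN.iIndepFun_sub_mul _)
      (hsub _ (by linarith) (by linarith)) (fun t => (hdrift _ t).ge.trans' (by simp [m]))
      hc hm (fun _ _ => rfl) hM4 ?_
    nlinarith [le_abs_self Amax, (Nat.cast_nonneg Nmax : (0 : ℝ) ≤ Nmax)]
  · rw [hexponent]
    refine one_sub_exp_le_measureReal_exit_below (hBN.iIndepFun_sub_mul _)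
      (hsub _ (by linarith) hαA) (fun t => (hdrift _ t).trans_le (by simp [m])) hc hm
      (fun _ _ => rfl) hM4 ?_
    nlinarith [abs_nonneg Amax, (Nat.cast_nonneg Nmax : (0 : ℝ) ≤ Nmax)]
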